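/- For every integer n ≥ 2, j^{(3)}_n − 4·j^{(3)}_{n−2} = 6 if n ≡ 0 (mod 3), and j^{(3)}_n − 4·j^{(3)}_{n−2} = −3 if n is not divisible by 3. -/
import Mathlib


/-- Third order Jacobsthal-Lucas numbers:
`j₀ = 2, j₁ = 1, j₂ = 5`, `j_{n+3} = j_{n+2} + j_{n+1} + 2 j_n`. -/
def jL3 : ℕ → ℤ
  | 0 => 2
  | 1 => 1
  | 2 => 5
  | n + 3 => jL3 (n + 2) + jL3 (n + 1) + 2 * jL3 n

lemma jL3_per3 (n : ℕ) : jL3 (n + 5) - 4 * jL3 (n + 3) = jL3 (n + 2) - 4 * jL3 n := by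
  show jL3 (n + 2 + 3) - 4 * jL3 (n + 3) = _
  rw [show n + 2 + 3 = n + 1 + 1 + 3 from rfl, jL3]
  rw [show n + 1 + 1 + 2 = n + 1 + 3 from rfl, jL3, jL3]
  ring

lemma jL3_aux : ∀ m : ℕ, jL3 (m + 2) - 4 * jL3 m = if (m + 2) % 3 = 0 then 6 else -3
  | 0 => by norm_num [jL3]
  | 1 => by norm_num [jL3]
  | 2 => by norm_num [jL3]
  | (m + 3) => by
      have h := jL3_aux m
      have hmod : (m + 3 + 2) % 3 = (m + 2) % 3 := by omega
      rw [show m + 3 + 2 = m + 5 from rfl, jL3_per3, h, hmod]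

theorem third_order_jacobsthal_lucas_identity (n : ℕ) (hn : 2 ≤ n) :
    ((3 ∣ n) → jL3 n - 4 * jL3 (n - 2) = 6) ∧
    (¬ (3 ∣ n) → jL3 n - 4 * jL3 (n - 2) = -3) := by
  obtain ⟨m, rfl⟩ : ∃ m, n = m + 2 := ⟨n - 2, by omega⟩
  have h := jL3_aux m
  simp only [Nat.add_sub_cancel]
  constructor
  · intro hd
    rw [h, if_pos (by omega : (m + 2) % 3 = 0)]
  · intro hd
    rw [h, if_neg (by omega : ¬ (m + 2) % 3 = 0)]
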